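/- arXiv:2210.11105 — 2 statements merged into one kernel-verified Lean document; each statement's English description precedes it below -/
import Mathlib

section
/- If for every state σ satisfying P∧b, executing S₁ from σ terminates in a state satisfying Q with cost at most A⟦t₁⟧σ, and for every state σ satisfying P∧¬b, executing S₂ from σ terminates in a state satisfying Q with cost at most A⟦t₂⟧σ, then for every state σ satisfying P, executing 'if b then S₁ else S₂' from σ terminates in a state satisfying Q with cost at most A⟦max(t₁,t₂) + TB⟦b⟧⟧σ, where TB⟦b⟧ is the (state-independent) cost of evaluating b. -/
/-- Program variables: plain variables or array cells. -/
abbrev Var := String ⊕ String × ℤ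

/-- A state maps variables (and array cells) to integers. -/
abbrev State := Var → ℤ

def State.update (σ : State) (v : Var) (n : ℤ) : State :=
  fun w => if w = v then n else σ w

inductive AExp where
  | const : ℤ → AExp
  | var : String → AExp
  | arr : String → AExp → AExp
  | add : AExp → AExp → AExp
  | sub : AExp → AExp → AExp
  | mul : AExp → AExp → AExp

def aeval (σ : State) : AExp → ℤ
  | .const n => n
  | .var x => σ (.inl x)
  | .arr x a => σ (.inr (x, aeval σ a))
  | .add a b => aeval σ a + aeval σ b
  | .sub a b => aeval σ a - aeval σ b
  | .mul a b => aeval σ a * aeval σ b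

/-- Cost of evaluating an arithmetic expression (unit atomic costs). -/
def acost : AExp → ℕ
  | .const _ => 1
  | .var _ => 1
  | .arr _ a => acost a + 1
  | .add a b => acost a + acost b + 1
  | .sub a b => acost a + acost b + 1
  | .mul a b => acost a + acost b + 1

inductive BExp where
  | tt | ff
  | eq : AExp → AExp → BExp
  | le : AExp → AExp → BExp
  | not : BExp → BExp
  | and : BExp → BExp → BExp

def beval (σ : State) : BExp → Bool
  | .tt => true
  | .ff => false
  | .eq a b => aeval σ a = aeval σ b
  | .le a b => aeval σ a ≤ aeval σ b
  | .not b => ! beval σ b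
  | .and b₁ b₂ => beval σ b₁ && beval σ b₂

/-- Cost of evaluating a boolean expression (state independent). -/
def bcost : BExp → ℕ
  | .tt => 1
  | .ff => 1
  | .eq a b => acost a + acost b + 1
  | .le a b => acost a + acost b + 1
  | .not b => bcost b + 1
  | .and b₁ b₂ => bcost b₁ + bcost b₂ + 1

inductive Stmt where
  | skip
  | assign : String → AExp → Stmt
  | arrAssign : String → AExp → AExp → Stmt
  | seq : Stmt → Stmt → Stmt
  | ite : BExp → Stmt → Stmt → Stmt
  | while : BExp → Stmt → Stmt

/-- Cost-instrumented big-step operational semantics: `BigStep S σ t σ'` means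
`⟨S,σ⟩ →ᵗ σ'`. -/
inductive BigStep : Stmt → State → ℕ → State → Prop where
  | skip {σ} : BigStep .skip σ 1 σ
  | assign {σ x a} :
      BigStep (.assign x a) σ (acost a + 1) (σ.update (.inl x) (aeval σ a))
  | arrAssign {σ x a₁ a₂} :
      BigStep (.arrAssign x a₁ a₂) σ (acost a₁ + acost a₂ + 1)
        (σ.update (.inr (x, aeval σ a₁)) (aeval σ a₂))
  | seq {S₁ S₂ σ σ' σ'' t₁ t₂} :
      BigStep S₁ σ t₁ σ' → BigStep S₂ σ' t₂ σ'' →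
      BigStep (.seq S₁ S₂) σ (t₁ + t₂) σ''
  | ifTrue {b S₁ S₂ σ σ' t} :
      beval σ b = true → BigStep S₁ σ t σ' →
      BigStep (.ite b S₁ S₂) σ (bcost b + t) σ'
  | ifFalse {b S₁ S₂ σ σ' t} :
      beval σ b = false → BigStep S₂ σ t σ' →
      BigStep (.ite b S₁ S₂) σ (bcost b + t) σ'
  | whileFalse {b S σ} :
      beval σ b = false → BigStep (.while b S) σ (bcost b) σ
  | whileTrue {b S σ σ' σ'' t₁ t₂} :
      beval σ b = true → BigStep S σ t₁ σ'' →
      BigStep (.while b S) σ'' t₂ σ' →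
      BigStep (.while b S) σ (bcost b + t₁ + t₂) σ'

/-- Validity of a cost-annotated Hoare triple `⊨ {P} S {Q | t}`. -/
def valid (P : State → Prop) (S : Stmt) (Q : State → Prop) (t : State → ℤ) : Prop :=
  ∀ σ c σ', P σ → BigStep S σ c σ' → Q σ' ∧ t σ ≥ (c : ℤ)

/-- Soundness of the cost-aware conditional rule. -/
theorem if_rule_sound (P Q : State → Prop) (b : BExp) (S₁ S₂ : Stmt)
    (t₁ t₂ : State → ℤ)
    (h₁ : ∀ σ, P σ → beval σ b = true →
      (∃ c σ', BigStep S₁ σ c σ') ∧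
      ∀ c σ', BigStep S₁ σ c σ' → Q σ' ∧ t₁ σ ≥ (c : ℤ))
    (h₂ : ∀ σ, P σ → beval σ b = false →
      (∃ c σ', BigStep S₂ σ c σ') ∧
      ∀ c σ', BigStep S₂ σ c σ' → Q σ' ∧ t₂ σ ≥ (c : ℤ)) :
    ∀ σ, P σ →
      (∃ c σ', BigStep (.ite b S₁ S₂) σ c σ') ∧
      ∀ c σ', BigStep (.ite b S₁ S₂) σ c σ' →
        Q σ' ∧ max (t₁ σ) (t₂ σ) + (bcost b : ℤ) ≥ (c : ℤ) := by
  intro σ hP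
  constructor
  · cases hb : beval σ b with
    | true =>
      obtain ⟨⟨c, σ', hS⟩, _⟩ := h₁ σ hP hb
      exact ⟨bcost b + c, σ', .ifTrue hb hS⟩
    | false =>
      obtain ⟨⟨c, σ', hS⟩, _⟩ := h₂ σ hP hb
      exact ⟨bcost b + c, σ', .ifFalse hb hS⟩
  · intro c σ' h
    cases h with
    | ifTrue hb hS =>
      obtain ⟨_, hall⟩ := h₁ σ hP hb
      obtain ⟨hQ, hle⟩ := hall _ _ hS
      refine ⟨hQ, ?_⟩
      push_cast
      have := le_max_left (t₁ σ) (t₂ σ)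
      omega
    | ifFalse hb hS =>
      obtain ⟨_, hall⟩ := h₂ σ hP hb
      obtain ⟨hQ, hle⟩ := hall _ _ hS
      refine ⟨hQ, ?_⟩
      push_cast
      have := le_max_right (t₁ σ) (t₂ σ)
      omega
end

section
/- Cost lower bound matching for while loops with constant body cost: if every execution of the loop body S from a state satisfying I∧b costs exactly c, every evaluation of b costs exactly d, and the loop 'while b do S' started from σ ⊨ I executes its body exactly m times before terminating, then the total execution cost is exactly m·(c + d) + d. -/
/-- `LoopCount b S σ m`: the loop `while b do S` started in `σ` executes its
body exactly `m` times. -/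
inductive LoopCount (b : BExp) (S : Stmt) : State → ℕ → Prop where
  | zero {σ} : beval σ b = false → LoopCount b S σ 0
  | succ {σ σ'' c m} : beval σ b = true → BigStep S σ c σ'' →
      LoopCount b S σ'' m → LoopCount b S σ (m + 1)

theorem BigStep.det {S σ} : ∀ {t σ' t₂ σ₂}, BigStep S σ t σ' → BigStep S σ t₂ σ₂ →
    t = t₂ ∧ σ' = σ₂ := by
  intro t σ' t₂ σ₂ h1
  induction h1 generalizing t₂ σ₂ with
  | skip => intro h2; cases h2; exact ⟨rfl, rfl⟩
  | assign => intro h2; cases h2; exact ⟨rfl, rfl⟩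
  | arrAssign => intro h2; cases h2; exact ⟨rfl, rfl⟩
  | seq ha hb iha ihb =>
    intro h2; cases h2 with
    | seq ha' hb' =>
      obtain ⟨e1, e2⟩ := iha ha'
      subst e2
      obtain ⟨e3, e4⟩ := ihb hb'
      exact ⟨by omega, e4⟩
  | ifTrue hb h ih =>
    intro h2; cases h2 with
    | ifTrue _ h' => obtain ⟨e1, e2⟩ := ih h'; exact ⟨by omega, e2⟩
    | ifFalse hb' _ => simp_all
  | ifFalse hb h ih =>
    intro h2; cases h2 with
    | ifFalse _ h' => obtain ⟨e1, e2⟩ := ih h'; exact ⟨by omega, e2⟩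
    | ifTrue hb' _ => simp_all
  | whileFalse hb =>
    intro h2; cases h2 with
    | whileFalse _ => exact ⟨rfl, rfl⟩
    | whileTrue hb' _ _ => simp_all
  | whileTrue hb hbody hrest ih1 ih2 =>
    intro h2; cases h2 with
    | whileFalse hb' => simp_all
    | whileTrue _ hbody' hrest' =>
      obtain ⟨e1, e2⟩ := ih1 hbody'
      subst e2
      obtain ⟨e3, e4⟩ := ih2 hrest'
      exact ⟨by omega, e4⟩

/-- If the body costs exactly `c` from any state satisfying `I ∧ b`, the test
costs exactly `d`, `I` is preserved by the body under `b`, and the loop runs its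
body exactly `m` times, then the total cost is exactly `m·(c + d) + d`. -/
theorem while_exact_cost (I : State → Prop) (b : BExp) (S : Stmt) (c d : ℕ)
    (hd : bcost b = d)
    (hpres : ∀ σ c' σ'', I σ → beval σ b = true → BigStep S σ c' σ'' → I σ'')
    (hc : ∀ σ c' σ'', I σ → beval σ b = true → BigStep S σ c' σ'' → c' = c) :
    ∀ σ t σ' m, I σ → LoopCount b S σ m → BigStep (.while b S) σ t σ' →
      t = m * (c + d) + d := by
  intro σ t σ' m hI hlc
  induction hlc generalizing t σ' with
  | zero hb =>
    intro hbs
    cases hbs with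
    | whileFalse => simpa using hd
    | whileTrue hb' _ _ => simp_all
  | succ hb hbody hrest ih =>
    intro hbs
    cases hbs with
    | whileFalse hb' => simp_all
    | whileTrue _ hbody' hrest' =>
      obtain ⟨e1, e2⟩ := BigStep.det hbody hbody'
      subst e2
      have hc' := hc _ _ _ hI hb hbody
      have hI' := hpres _ _ _ hI hb hbody
      have ht2 := ih _ _ hI' hrest'
      subst hd
      rw [ht2, ← e1, hc']
      ring
end
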